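/- Let (X,d) be a compact metric space and f : X → X continuous. For every x ∈ X, the ω-limit set ω(x,f) is weakly incompressible: for every nonempty, closed, proper subset M of ω(x,f), M ∩ cl(f(ω(x,f) \ M)) ≠ ∅. -/

import Mathlib

open Set Filter Topology

/-
If `M` were disjoint from `A = cl f(ω \ M)`, separate them by an open `U ⊇ M` with
`cl U ∩ A = ∅`. The orbit of `x` comes back near points of `M` and near points of
`f(ω \ M) ⊆ A` infinitely often, so it enters `U` from outside infinitely often.
A cluster point `w` of the orbit at the times just before entering lies in
`ω \ U ⊆ ω \ M`, while `f w ∈ cl U`, contradicting `f w ∈ A`.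
-/

def omegaLimitSet {X : Type*} [MetricSpace X] (f : X → X) (x : X) : Set X :=
  ⋂ k : ℕ, closure ((fun n => f^[n] x) '' Set.Ici k)

theorem Nat.frequently_atTop_not_and_succ {p : ℕ → Prop} (h : ∃ᶠ n in atTop, p n)
    (h' : ∃ᶠ n in atTop, ¬p n) : ∃ᶠ n in atTop, ¬p n ∧ p (n + 1) := by
  rw [frequently_atTop] at h h' ⊢
  intro a
  obtain ⟨b, hab, hb⟩ := h' a
  by_contra! hstay
  have hnot : ∀ n ≥ b, ¬p n := fun n hn =>
    Nat.le_induction hb (fun k hbk hk => hstay k (hab.trans hbk) hk) n hn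
  obtain ⟨c, hbc, hc⟩ := h b
  exact hnot c hbc hc

section

variable {X : Type*} [MetricSpace X] {f : X → X} {x : X}

theorem mem_omegaLimitSet_iff_mapClusterPt {p : X} :
    p ∈ omegaLimitSet f x ↔ MapClusterPt p atTop (fun n => f^[n] x) := by
  rw [mapClusterPt_atTop_iff_forall_mem_closure, omegaLimitSet, mem_iInter]

theorem exists_mem_omegaLimitSet_notMem_and_map_mem_closure [CompactSpace X]
    (hf : Continuous f) {U : Set X} (hU : IsOpen U) (hin : ∃ᶠ n in atTop, f^[n] x ∈ U)
    (hout : ∃ᶠ n in atTop, f^[n] x ∉ U) :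
    ∃ w ∈ omegaLimitSet f x, w ∉ U ∧ f w ∈ closure U := by
  set G := atTop ⊓ 𝓟 {n | f^[n] x ∉ U ∧ f^[n + 1] x ∈ U}
  have : NeBot G := frequently_iff_neBot.1 (Nat.frequently_atTop_not_and_succ hin hout)
  have hG : ∀ᶠ n in G, f^[n] x ∉ U ∧ f^[n + 1] x ∈ U :=
    mem_inf_of_right (mem_principal_self _)
  obtain ⟨w, hw⟩ := exists_clusterPt_of_compactSpace (map (fun n => f^[n] x) G)
  have hwG : MapClusterPt w G (fun n => f^[n] x) := hw
  refine ⟨w, mem_omegaLimitSet_iff_mapClusterPt.2 (hwG.mono inf_le_left),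
    hU.isClosed_compl.mem_of_mapClusterPt hwG (hG.mono fun n hn => hn.1),
    isClosed_closure.mem_of_mapClusterPt (hwG.continuousAt_comp hf.continuousAt) ?_⟩
  filter_upwards [hG] with n hn
  simpa only [Function.comp_apply, ← Function.iterate_succ_apply'] using subset_closure hn.2

end

theorem omegaLimitSet_weaklyIncompressible {X : Type*} [MetricSpace X] [CompactSpace X]
    (f : X → X) (hf : Continuous f) (x : X) (M : Set X)
    (hMs : M ⊆ omegaLimitSet f x) (hMne : M.Nonempty) (hMc : IsClosed M)
    (hMprop : M ≠ omegaLimitSet f x) :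
    (M ∩ closure (f '' (omegaLimitSet f x \ M))).Nonempty := by
  set Ω := omegaLimitSet f x
  by_contra hdisj
  rw [not_nonempty_iff_eq_empty, ← disjoint_iff_inter_eq_empty] at hdisj
  obtain ⟨U, hUo, hMU, hUA⟩ :=
    normal_exists_closure_subset hMc isClosed_closure.isOpen_compl hdisj.subset_compl_right
  have hfU : ∀ w ∈ Ω \ M, f w ∉ closure U := fun w hw hfw =>
    hUA hfw (subset_closure (mem_image_of_mem f hw))
  obtain ⟨p, hp⟩ := hMne
  obtain ⟨y, hyΩ, hyM⟩ := exists_of_ssubset (hMs.ssubset_of_ne hMprop)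
  have hin : ∃ᶠ n in atTop, f^[n] x ∈ U :=
    (mem_omegaLimitSet_iff_mapClusterPt.1 (hMs hp)).frequently (hUo.mem_nhds (hMU hp))
  have hout : ∃ᶠ n in atTop, f^[n] x ∉ U := by
    have hnear : ∃ᶠ n in atTop, f (f^[n] x) ∉ closure U :=
      (mem_omegaLimitSet_iff_mapClusterPt.1 hyΩ).frequently
        (hf.continuousAt.eventually_mem
          (isClosed_closure.isOpen_compl.mem_nhds (hfU y ⟨hyΩ, hyM⟩)))
    refine (tendsto_add_atTop_nat 1).frequently (hnear.mono fun n hn hU => hn ?_)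
    rw [← Function.iterate_succ_apply' f n x]
    exact subset_closure hU
  obtain ⟨w, hwΩ, hwU, hfwU⟩ :=
    exists_mem_omegaLimitSet_notMem_and_map_mem_closure hf hUo hin hout
  exact hfU w ⟨hwΩ, fun hwM => hwU (hMU hwM)⟩ hfwU
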